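/- If T is a Dunford-Schwartz operator on ℓ∞, x ∈ ℓ∞, and the Cesàro averages A(n,T)(x) = (1/n) Σ_{k=0}^{n−1} T^k(x) converge in ℓ∞-norm to x̂, then x̂* ≺ x* in the Hardy-Littlewood-Pólya sense, i.e. Σ_{s=1}^{k} (x̂*)_s ≤ Σ_{s=1}^{k} (x*)_s for every k. -/

import Mathlib

/-!
Every Cesàro average `A(n,T) = ∑_{k<n} n⁻¹ Tᵏ` is a convex combination of powers of `T`, hence
again Dunford–Schwartz, and a Dunford–Schwartz operator `S` satisfies `Sx ≺ x`: clipping `x` at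
height `x*_k` writes `x = u + v` with `‖u‖₁ + (k + 1)‖v‖∞ ≤ ∑_{s ≤ k} x*_s`, while
`∑_{s ≤ k} (Sx)*_s ≤ ‖Su‖₁ + (k + 1)‖Sv‖∞` since `(·)*_s` is `1`-Lipschitz for `‖·‖∞` and
`∑_{s < m} y*_s ≤ ‖y‖₁`. The same Lipschitz bound makes the partial sums of `(A(n,T)x)*`
converge to those of `x̂*`, and the inequality passes to the limit.
-/

open Filter Finset Topology

/-- The supremum norm of a real sequence. -/
noncomputable def supNorm (x : ℕ → ℝ) : ℝ := ⨆ n, |x n|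

/-- `x` is a bounded sequence (i.e. `x ∈ ℓ∞`). -/
def IsBdd (x : ℕ → ℝ) : Prop := ∃ C, ∀ n, |x n| ≤ C

/-- The non-increasing rearrangement of a bounded sequence, `0`-indexed:
`(x*)_n = inf over finite F with card F ≤ n of sup_{k ∉ F} |x k|`. -/
noncomputable def rearr (x : ℕ → ℝ) (n : ℕ) : ℝ :=
  sInf { r : ℝ | ∃ F : Finset ℕ, F.card ≤ n ∧ r = ⨆ k : {k : ℕ // k ∉ F}, |x k.1| }

/-- A Dunford–Schwartz operator: a linear operator which is an `ℓ₁`-contraction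
and an `ℓ∞`-contraction. -/
def IsDS (T : (ℕ → ℝ) →ₗ[ℝ] (ℕ → ℝ)) : Prop :=
  (∀ x : ℕ → ℝ, Summable (fun n => |x n|) →
      Summable (fun n => |T x n|) ∧ ∑' n, |T x n| ≤ ∑' n, |x n|) ∧
  (∀ x : ℕ → ℝ, IsBdd x → IsBdd (T x) ∧ supNorm (T x) ≤ supNorm x)

/-- The Cesàro average `A(n,T)(x) = (1/n) ∑_{k=0}^{n-1} T^k x`. -/
noncomputable def cesaro (T : (ℕ → ℝ) →ₗ[ℝ] (ℕ → ℝ)) (n : ℕ) (x : ℕ → ℝ) : ℕ → ℝ :=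
  fun s => (∑ k ∈ Finset.range n, (⇑T)^[k] x s) / n

noncomputable def supNormOff (x : ℕ → ℝ) (F : Finset ℕ) : ℝ := ⨆ k : {k : ℕ // k ∉ F}, |x k.1|

instance Finset.instNonemptySubtypeNotMem (F : Finset ℕ) : Nonempty {k : ℕ // k ∉ F} :=
  let ⟨a, ha⟩ := F.exists_notMem
  ⟨⟨a, ha⟩⟩

lemma IsBdd.sub {y z : ℕ → ℝ} (hy : IsBdd y) (hz : IsBdd z) : IsBdd (y - z) :=
  let ⟨C, hC⟩ := hy
  let ⟨D, hD⟩ := hz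
  ⟨C + D, fun n => (abs_sub (y n) (z n)).trans (add_le_add (hC n) (hD n))⟩

lemma supNorm_nonneg (x : ℕ → ℝ) : 0 ≤ supNorm x :=
  Real.iSup_nonneg fun _ => abs_nonneg _

lemma supNorm_le {x : ℕ → ℝ} {C : ℝ} (h : ∀ n, |x n| ≤ C) : supNorm x ≤ C :=
  ciSup_le h

lemma abs_le_supNorm {x : ℕ → ℝ} (hx : IsBdd x) (n : ℕ) : |x n| ≤ supNorm x :=
  let ⟨C, hC⟩ := hx
  le_ciSup ⟨C, Set.forall_mem_range.2 hC⟩ n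

lemma supNorm_sub_comm (y z : ℕ → ℝ) : supNorm (y - z) = supNorm (z - y) := by
  simp only [supNorm, Pi.sub_apply, abs_sub_comm]

lemma supNormOff_nonneg (x : ℕ → ℝ) (F : Finset ℕ) : 0 ≤ supNormOff x F :=
  Real.iSup_nonneg fun _ => abs_nonneg _

lemma supNormOff_le {x : ℕ → ℝ} {F : Finset ℕ} {C : ℝ} (h : ∀ k ∉ F, |x k| ≤ C) :
    supNormOff x F ≤ C :=
  ciSup_le fun k => h k.1 k.2

lemma abs_le_supNormOff {x : ℕ → ℝ} (hx : IsBdd x) {F : Finset ℕ} {k : ℕ} (hk : k ∉ F) :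
    |x k| ≤ supNormOff x F :=
  let ⟨C, hC⟩ := hx
  le_ciSup (f := fun k : {k : ℕ // k ∉ F} => |x k.1|)
    ⟨C, Set.forall_mem_range.2 fun k => hC k.1⟩ ⟨k, hk⟩

section Rearrangement

variable {x : ℕ → ℝ} {n : ℕ}

lemma rearr_le_supNormOff {F : Finset ℕ} (hF : F.card ≤ n) : rearr x n ≤ supNormOff x F :=
  csInf_le ⟨0, by rintro r ⟨G, -, rfl⟩; exact supNormOff_nonneg x G⟩ ⟨F, hF, rfl⟩

lemma le_rearr {C : ℝ} (h : ∀ F : Finset ℕ, F.card ≤ n → C ≤ supNormOff x F) :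
    C ≤ rearr x n :=
  le_csInf ⟨_, ∅, Nat.zero_le n, rfl⟩ <| by rintro r ⟨F, hF, rfl⟩; exact h F hF

lemma rearr_nonneg (x : ℕ → ℝ) (n : ℕ) : 0 ≤ rearr x n :=
  le_rearr fun F _ => supNormOff_nonneg x F

lemma rearr_antitone (x : ℕ → ℝ) : Antitone (rearr x) := fun _ _ hnm =>
  le_rearr fun _ hF => rearr_le_supNormOff (hF.trans hnm)

lemma le_rearr_of_lt_card (hx : IsBdd x) {A : Finset ℕ} {c : ℝ} (hA : n < A.card)
    (hc : ∀ a ∈ A, c ≤ |x a|) : c ≤ rearr x n :=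
  le_rearr fun _ hF =>
    let ⟨b, hbA, hbF⟩ := exists_mem_notMem_of_card_lt_card (hF.trans_lt hA)
    (hc b hbA).trans (abs_le_supNormOff hx hbF)

lemma card_le_of_rearr_lt_abs (hx : IsBdd x) {A : Finset ℕ} (hA : ∀ a ∈ A, rearr x n < |x a|) :
    A.card ≤ n := by
  by_contra! hcard
  obtain ⟨a, haA, hmin⟩ := A.exists_min_image (fun a => |x a|) (card_pos.1 (by omega))
  exact (hA a haA).not_ge (le_rearr_of_lt_card hx hcard hmin)

lemma finite_setOf_rearr_lt_abs (hx : IsBdd x) (n : ℕ) : {k | rearr x n < |x k|}.Finite := by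
  by_contra hinf
  obtain ⟨A, hA, hcard⟩ := Set.Infinite.exists_subset_card_eq hinf (n + 1)
  have := card_le_of_rearr_lt_abs hx fun a ha => hA ha
  omega

lemma sum_abs_le_sum_rearr (hx : IsBdd x) (A : Finset ℕ) :
    ∑ a ∈ A, |x a| ≤ ∑ s ∈ range A.card, rearr x s := by
  induction A using Finset.induction_on_min_value (fun a => |x a|) with
  | empty => simp
  | insert a A haA hmin ih =>
    have hle : |x a| ≤ rearr x A.card :=
      le_rearr_of_lt_card hx (by rw [card_insert_of_notMem haA]; omega) fun b hb => by
        rcases mem_insert.1 hb with rfl | hb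
        exacts [le_rfl, hmin b hb]
    rw [sum_insert haA, card_insert_of_notMem haA, sum_range_succ, add_comm]
    exact add_le_add ih hle

/-- Greedy choice: each new index carries a value of `|x|` within `δ` of the supremum of `|x|`
off the indices already chosen. -/
lemma exists_card_eq_sum_rearr_le (δ : ℝ) (hδ : 0 < δ) (m : ℕ) :
    ∃ F : Finset ℕ, F.card = m ∧ ∑ s ∈ range m, rearr x s ≤ ∑ k ∈ F, |x k| + m * δ := by
  induction m with
  | zero => exact ⟨∅, by simp⟩
  | succ m ih =>
    obtain ⟨F, hFcard, hF⟩ := ih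
    obtain ⟨⟨a, haF⟩, ha⟩ := exists_lt_of_lt_ciSup (sub_lt_self (supNormOff x F) hδ)
    have hrearr : rearr x m ≤ supNormOff x F := rearr_le_supNormOff hFcard.le
    refine ⟨insert a F, by rw [card_insert_of_notMem haF, hFcard], ?_⟩
    calc ∑ s ∈ range (m + 1), rearr x s
        ≤ (∑ k ∈ F, |x k| + m * δ) + (|x a| + δ) := by
          rw [sum_range_succ]; exact add_le_add hF (by linarith)
      _ = ∑ k ∈ insert a F, |x k| + ↑(m + 1) * δ := by
          rw [sum_insert haF]; push_cast; ring

lemma sum_rearr_le_tsum (hs : Summable fun k => |x k|) (m : ℕ) :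
    ∑ s ∈ range m, rearr x s ≤ ∑' k, |x k| := by
  refine le_of_forall_pos_le_add fun ε hε => ?_
  obtain ⟨F, -, hF⟩ := exists_card_eq_sum_rearr_le (ε / (m + 1)) (by positivity) m
  have hm : (m : ℝ) * (ε / (m + 1)) ≤ ε :=
    calc (m : ℝ) * (ε / (m + 1)) = ε * (m / (m + 1)) := by ring
      _ ≤ ε := mul_le_of_le_one_right hε.le
        (div_le_one_of_le₀ (le_add_of_nonneg_right zero_le_one) (by positivity))
  exact hF.trans (add_le_add (hs.sum_le_tsum F fun k _ => abs_nonneg (x k)) hm)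

lemma rearr_le_add_supNorm_sub {y z : ℕ → ℝ} (hy : IsBdd y) (hz : IsBdd z) (n : ℕ) :
    rearr y n ≤ rearr z n + supNorm (y - z) := by
  rw [← sub_le_iff_le_add]
  refine le_rearr fun F hF => sub_le_iff_le_add.2 <| (rearr_le_supNormOff hF).trans <|
    supNormOff_le fun k hk => ?_
  calc |y k| ≤ |z k| + |(y - z) k| := sub_le_iff_le_add'.1 (abs_sub_abs_le_abs_sub (y k) (z k))
    _ ≤ supNormOff z F + supNorm (y - z) :=
      add_le_add (abs_le_supNormOff hz hk) (abs_le_supNorm (hy.sub hz) k)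

lemma sum_rearr_le_add_supNorm_sub {y z : ℕ → ℝ} (hy : IsBdd y) (hz : IsBdd z) (m : ℕ) :
    ∑ s ∈ range m, rearr y s ≤ ∑ s ∈ range m, rearr z s + m * supNorm (y - z) := by
  calc ∑ s ∈ range m, rearr y s ≤ ∑ s ∈ range m, (rearr z s + supNorm (y - z)) :=
        sum_le_sum fun s _ => rearr_le_add_supNorm_sub hy hz s
    _ = _ := by simp [sum_add_distrib]

lemma abs_rearr_sub_le {y z : ℕ → ℝ} (hy : IsBdd y) (hz : IsBdd z) (n : ℕ) :
    |rearr y n - rearr z n| ≤ supNorm (y - z) := by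
  rw [abs_sub_le_iff, sub_le_iff_le_add', sub_le_iff_le_add']
  exact ⟨rearr_le_add_supNorm_sub hy hz n, supNorm_sub_comm z y ▸ rearr_le_add_supNorm_sub hz hy n⟩

lemma tendsto_rearr {y : ℕ → ℕ → ℝ} {z : ℕ → ℝ} (hy : ∀ i, IsBdd (y i)) (hz : IsBdd z)
    (h : Tendsto (fun i => supNorm (y i - z)) atTop (𝓝 0)) (n : ℕ) :
    Tendsto (fun i => rearr (y i) n) atTop (𝓝 (rearr z n)) :=
  tendsto_iff_norm_sub_tendsto_zero.2 <|
    squeeze_zero (fun _ => abs_nonneg _) (fun i => abs_rearr_sub_le (hy i) hz n) h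

end Rearrangement

lemma abs_clamp_le {t : ℝ} (ht : 0 ≤ t) (a : ℝ) : |max (-t) (min t a)| ≤ t :=
  abs_le.2 ⟨le_max_left _ _, max_le (by linarith) (min_le_left _ _)⟩

lemma abs_sub_clamp {t : ℝ} (ht : 0 ≤ t) (a : ℝ) :
    |a - max (-t) (min t a)| = max (|a| - t) 0 := by
  simp only [abs_eq_max_neg, max_def, min_def]
  split_ifs <;> linarith

section Decomposition

variable {x : ℕ → ℝ}

lemma sum_abs_add_nsmul_rearr_le (hx : IsBdd x) {A : Finset ℕ} {k : ℕ} (hA : A.card ≤ k + 1) :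
    ∑ a ∈ A, |x a| + (k + 1 - A.card) • rearr x k ≤ ∑ s ∈ range (k + 1), rearr x s := by
  rw [← sum_range_add_sum_Ico _ hA]
  refine add_le_add (sum_abs_le_sum_rearr hx A) ?_
  have := card_nsmul_le_sum (Ico A.card (k + 1)) (rearr x) (rearr x k) fun s hs =>
    rearr_antitone x (Nat.lt_succ_iff.1 (mem_Ico.1 hs).2)
  rwa [Nat.card_Ico] at this

lemma exists_bdd_tsum_sub_add_mul_supNorm_le (hx : IsBdd x) (k : ℕ) :
    ∃ v : ℕ → ℝ, IsBdd v ∧ Summable (fun n => |x n - v n|) ∧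
      ∑' n, |x n - v n| + (k + 1) * supNorm v ≤ ∑ s ∈ range (k + 1), rearr x s := by
  set t := rearr x k
  have ht : 0 ≤ t := rearr_nonneg x k
  set A := (finite_setOf_rearr_lt_abs hx k).toFinset
  have hmemA : ∀ n, n ∈ A ↔ t < |x n| := fun n => Set.Finite.mem_toFinset _
  have hA : A.card ≤ k := card_le_of_rearr_lt_abs hx fun n hn => (hmemA n).1 hn
  set v : ℕ → ℝ := fun n => max (-t) (min t (x n))
  have hv : ∀ n, |v n| ≤ t := fun n => abs_clamp_le ht (x n)
  have hzero : ∀ n ∉ A, |x n - v n| = 0 := fun n hn => by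
    rw [abs_sub_clamp ht, max_eq_right (sub_nonpos.2 (not_lt.1 (mt (hmemA n).2 hn)))]
  have htsum : ∑' n, |x n - v n| = ∑ n ∈ A, |x n| - A.card • t := by
    rw [tsum_eq_sum hzero, ← sum_const, ← sum_sub_distrib]
    refine sum_congr rfl fun n hn => ?_
    rw [abs_sub_clamp ht, max_eq_left (sub_nonneg.2 ((hmemA n).1 hn).le)]
  refine ⟨v, ⟨t, hv⟩, summable_of_ne_finset_zero hzero, ?_⟩
  calc ∑' n, |x n - v n| + (k + 1) * supNorm v
      ≤ ∑ n ∈ A, |x n| - A.card • t + (k + 1) * t := by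
        rw [htsum]; gcongr; exact supNorm_le hv
    _ = ∑ n ∈ A, |x n| + (k + 1 - A.card) • t := by
        rw [nsmul_eq_mul, nsmul_eq_mul, Nat.cast_sub (by omega)]; push_cast; ring
    _ ≤ _ := sum_abs_add_nsmul_rearr_le hx (by omega)

end Decomposition

namespace IsDS

variable {S T : (ℕ → ℝ) →ₗ[ℝ] (ℕ → ℝ)}

lemma one : IsDS 1 :=
  ⟨fun _ hx => ⟨hx, le_rfl⟩, fun _ hx => ⟨hx, le_rfl⟩⟩

lemma mul (hS : IsDS S) (hT : IsDS T) : IsDS (S * T) :=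
  ⟨fun x hx =>
    let hTx := hT.1 x hx
    let hSTx := hS.1 _ hTx.1
    ⟨hSTx.1, hSTx.2.trans hTx.2⟩,
   fun x hx =>
    let hTx := hT.2 x hx
    let hSTx := hS.2 _ hTx.1
    ⟨hSTx.1, hSTx.2.trans hTx.2⟩⟩

lemma pow (hT : IsDS T) (k : ℕ) : IsDS (T ^ k) := by
  induction k with
  | zero => exact one
  | succ k ih => rw [pow_succ']; exact hT.mul ih

lemma sum_smul {ι : Type*} {s : Finset ι} {S : ι → (ℕ → ℝ) →ₗ[ℝ] (ℕ → ℝ)} {w : ι → ℝ}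
    (hS : ∀ i ∈ s, IsDS (S i)) (hw : ∀ i ∈ s, 0 ≤ w i) (hw1 : ∑ i ∈ s, w i ≤ 1) :
    IsDS (∑ i ∈ s, w i • S i) := by
  have habs : ∀ x n, |(∑ i ∈ s, w i • S i) x n| ≤ ∑ i ∈ s, w i * |S i x n| := fun x n => by
    simp only [LinearMap.sum_apply, Finset.sum_apply, LinearMap.smul_apply, Pi.smul_apply,
      smul_eq_mul]
    refine (abs_sum_le_sum_abs _ _).trans_eq (sum_congr rfl fun i hi => ?_)
    rw [abs_mul, abs_of_nonneg (hw i hi)]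
  have hweighted : ∀ c, 0 ≤ c → ∑ i ∈ s, w i * c ≤ c := fun c hc => by
    rw [← sum_mul]; exact mul_le_of_le_one_left hc hw1
  refine ⟨fun x hx => ?_, fun x hx => ?_⟩
  · have hsum : Summable fun n => ∑ i ∈ s, w i * |S i x n| :=
      summable_sum fun i hi => ((hS i hi).1 x hx).1.mul_left (w i)
    refine ⟨hsum.of_nonneg_of_le (fun _ => abs_nonneg _) (habs x), ?_⟩
    calc ∑' n, |(∑ i ∈ s, w i • S i) x n| ≤ ∑' n, ∑ i ∈ s, w i * |S i x n| :=
          (hsum.of_nonneg_of_le (fun _ => abs_nonneg _) (habs x)).tsum_le_tsum (habs x) hsum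
      _ = ∑ i ∈ s, w i * ∑' n, |S i x n| := by
          rw [Summable.tsum_finsetSum fun i hi => ((hS i hi).1 x hx).1.mul_left (w i)]
          simp only [tsum_mul_left]
      _ ≤ ∑ i ∈ s, w i * ∑' n, |x n| :=
          sum_le_sum fun i hi => mul_le_mul_of_nonneg_left ((hS i hi).1 x hx).2 (hw i hi)
      _ ≤ ∑' n, |x n| := hweighted _ (tsum_nonneg fun n => abs_nonneg (x n))
  · have hpt : ∀ n, |(∑ i ∈ s, w i • S i) x n| ≤ supNorm x := fun n =>
      calc _ ≤ ∑ i ∈ s, w i * |S i x n| := habs x n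
        _ ≤ ∑ i ∈ s, w i * supNorm x := sum_le_sum fun i hi => mul_le_mul_of_nonneg_left
            ((abs_le_supNorm ((hS i hi).2 x hx).1 n).trans ((hS i hi).2 x hx).2) (hw i hi)
        _ ≤ supNorm x := hweighted _ (supNorm_nonneg x)
    exact ⟨⟨_, hpt⟩, supNorm_le hpt⟩

theorem sum_rearr_le (hS : IsDS S) {x : ℕ → ℝ} (hx : IsBdd x) (k : ℕ) :
    ∑ s ∈ range (k + 1), rearr (S x) s ≤ ∑ s ∈ range (k + 1), rearr x s := by
  obtain ⟨v, hv, hsum, hK⟩ := exists_bdd_tsum_sub_add_mul_supNorm_le hx k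
  obtain ⟨hSsum, hStsum⟩ := hS.1 (x - v) hsum
  have hSxv : S x - S (x - v) = S v := by rw [map_sub, sub_sub_cancel]
  calc ∑ s ∈ range (k + 1), rearr (S x) s
      ≤ ∑ s ∈ range (k + 1), rearr (S (x - v)) s + ↑(k + 1) * supNorm (S x - S (x - v)) :=
        sum_rearr_le_add_supNorm_sub (hS.2 x hx).1 (hS.2 _ (hx.sub hv)).1 _
    _ ≤ ∑' n, |x n - v n| + (k + 1) * supNorm v := by
        rw [hSxv]
        push_cast
        gcongr
        exacts [(sum_rearr_le_tsum hSsum _).trans hStsum, (hS.2 v hv).2]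
    _ ≤ _ := hK

end IsDS

noncomputable def cesaroOp (T : (ℕ → ℝ) →ₗ[ℝ] (ℕ → ℝ)) (n : ℕ) : (ℕ → ℝ) →ₗ[ℝ] (ℕ → ℝ) :=
  ∑ k ∈ range n, (n : ℝ)⁻¹ • T ^ k

lemma cesaro_eq_cesaroOp (T : (ℕ → ℝ) →ₗ[ℝ] (ℕ → ℝ)) (n : ℕ) (x : ℕ → ℝ) :
    cesaro T n x = cesaroOp T n x := by
  funext s
  simp only [cesaro, cesaroOp, LinearMap.sum_apply, Finset.sum_apply, LinearMap.smul_apply,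
    Pi.smul_apply, smul_eq_mul, ← mul_sum, Module.End.pow_apply, div_eq_inv_mul]

lemma IsDS.cesaroOp {T : (ℕ → ℝ) →ₗ[ℝ] (ℕ → ℝ)} (hT : IsDS T) (n : ℕ) : IsDS (cesaroOp T n) :=
  IsDS.sum_smul (fun k _ => hT.pow k) (fun _ _ => by positivity) <| by
    rw [sum_const, card_range, nsmul_eq_mul]
    exact mul_inv_le_one

/-- If the Cesàro averages of `x ∈ ℓ∞` under a Dunford–Schwartz operator converge in
the `ℓ∞`-norm to `x̂`, then `x̂* ≺ x*` in the Hardy–Littlewood–Pólya sense. -/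
theorem stmt12 (T : (ℕ → ℝ) →ₗ[ℝ] (ℕ → ℝ)) (hT : IsDS T)
    (x x' : ℕ → ℝ) (hx : IsBdd x) (hx' : IsBdd x')
    (hconv : Tendsto (fun n => supNorm (fun s => cesaro T n x s - x' s)) atTop (nhds 0)) :
    ∀ k, ∑ s ∈ Finset.range (k + 1), rearr x' s ≤ ∑ s ∈ Finset.range (k + 1), rearr x s := by
  intro k
  have hbdd : ∀ n, IsBdd (cesaro T n x) := fun n => by
    rw [cesaro_eq_cesaroOp]; exact ((hT.cesaroOp n).2 x hx).1
  have hlim : Tendsto (fun n => ∑ s ∈ range (k + 1), rearr (cesaro T n x) s) atTop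
      (𝓝 (∑ s ∈ range (k + 1), rearr x' s)) :=
    tendsto_finsetSum _ fun s _ => tendsto_rearr hbdd hx' hconv s
  refine le_of_tendsto' hlim fun n => ?_
  rw [cesaro_eq_cesaroOp]
  exact (hT.cesaroOp n).sum_rearr_le hx k
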